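/- arXiv:1203.6302 — 3 statements merged into one kernel-verified Lean document; each statement's English description precedes it below -/
import Mathlib

section
/- Let ω be a modulus of continuity with ω(0+) = 0 and ω″(0+) = −∞. Let θ : ℝ² × [0,∞) → ℝ be jointly C^∞ and ℤ²-periodic in the space variable, and suppose θ(·,0) obeys ω. If there is a positive time at which θ(·,t) does not obey ω, then there exist t₁ > 0 and points x ≠ y in ℝ² such that θ(x,t₁) − θ(y,t₁) = ω(|x−y|), and θ(·,t) obeys ω for every 0 ≤ t < t₁. -/
open MeasureTheory Set Real Filter Topology

set_option maxHeartbeats 1000000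
noncomputable section

/-- The plane `ℝ²`. -/
abbrev V2 := EuclideanSpace ℝ (Fin 2)

/-- The integer vector `k ∈ ℤ² ⊆ ℝ²`. -/
def intVec (k : Fin 2 → ℤ) : V2 := WithLp.toLp 2 ![(k 0 : ℝ), (k 1 : ℝ)]

/-- A modulus of continuity: a positive, non-decreasing, continuous, concave function on
`(0,∞)`, piecewise `C²` with one-sided derivatives, with `ω'(0+) < ∞` (encoded through a
uniform bound on slopes) and `ω''(0+) = -∞`. -/
structure IsModulusOfContinuity (ω : ℝ → ℝ) : Prop where
  pos : ∀ ξ : ℝ, 0 < ξ → 0 < ω ξ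
  mono : MonotoneOn ω (Set.Ioi 0)
  cont : ContinuousOn ω (Set.Ioi 0)
  concave : ConcaveOn ℝ (Set.Ioi 0) ω
  piecewiseC2 : ∃ S : Set ℝ, S.Countable ∧ ∀ ξ ∈ Set.Ioi (0:ℝ) \ S, ContDiffAt ℝ 2 ω ξ
  one_sided_derivs : ∀ ξ : ℝ, 0 < ξ →
    (∃ d, HasDerivWithinAt ω d (Set.Ici ξ) ξ) ∧ (∃ d, HasDerivWithinAt ω d (Set.Iic ξ) ξ)
  deriv_zero_finite : ∃ c : ℝ, ∀ a b : ℝ, 0 < a → a < b → ω b - ω a ≤ c * (b - a)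
  second_deriv_zero_bot :
    Filter.Tendsto (fun ξ => deriv (deriv ω) ξ) (nhdsWithin 0 (Set.Ioi 0)) Filter.atBot

/-- A function `f` obeys the modulus of continuity `ω` if `|f x - f y| < ω |x - y|`
whenever `x ≠ y`. -/
def Obeys (f : V2 → ℝ) (ω : ℝ → ℝ) : Prop :=
  ∀ x y : V2, x ≠ y → |f x - f y| < ω ‖x - y‖


namespace BT

variable {ω : ℝ → ℝ}

/-- the optimal Lipschitz constant `c = ω'(0+)` -/
def cmod (ω : ℝ → ℝ) : ℝ := sSup ((fun ξ => ω ξ / ξ) '' Set.Ioi 0)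

/-- right derivative of ω -/
def Dr (ω : ℝ → ℝ) (ξ : ℝ) : ℝ := derivWithin ω (Set.Ici ξ) ξ

theorem hDr (hω : IsModulusOfContinuity ω) {ξ : ℝ} (hξ : 0 < ξ) :
    HasDerivWithinAt ω (Dr ω ξ) (Set.Ici ξ) ξ := by
  obtain ⟨d, hd⟩ := (hω.one_sided_derivs ξ hξ).1
  rwa [Dr, hd.derivWithin ((uniqueDiffOn_Ici ξ) ξ Set.self_mem_Ici)]

theorem omega_le_c0 (hω0 : Tendsto ω (𝓝[>] (0:ℝ)) (𝓝 0))
    {c0 : ℝ} (hc0 : ∀ a b : ℝ, 0 < a → a < b → ω b - ω a ≤ c0 * (b - a)) :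
    ∀ ξ : ℝ, 0 < ξ → ω ξ ≤ c0 * ξ := by
  intro ξ hξ
  have hne : (𝓝[Set.Ioo (0:ℝ) ξ] 0).NeBot := left_nhdsWithin_Ioo_neBot hξ
  have htend : Tendsto (fun a => ω a + c0 * (ξ - a)) (𝓝[Set.Ioo (0:ℝ) ξ] 0)
      (𝓝 (0 + c0 * (ξ - 0))) := by
    apply Tendsto.add
    · exact hω0.mono_left (nhdsWithin_mono _ Set.Ioo_subset_Ioi_self)
    · apply Tendsto.mono_left _ nhdsWithin_le_nhds
      exact (tendsto_const_nhds.mul ((tendsto_const_nhds.sub tendsto_id)))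
  have hev : ∀ a ∈ Set.Ioo (0:ℝ) ξ, ω ξ ≤ ω a + c0 * (ξ - a) := by
    intro a ha
    have := hc0 a ξ ha.1 ha.2
    linarith
  have := ge_of_tendsto htend (eventually_nhdsWithin_of_forall hev)
  simpa using this

theorem bddAbove_slopes (hω : IsModulusOfContinuity ω)
    (hω0 : Tendsto ω (𝓝[>] (0:ℝ)) (𝓝 0)) :
    BddAbove ((fun ξ => ω ξ / ξ) '' Set.Ioi 0) := by
  obtain ⟨c0, hc0⟩ := hω.deriv_zero_finite
  refine ⟨c0, ?_⟩
  rintro r ⟨ξ, hξ, rfl⟩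
  rw [div_le_iff₀ hξ]
  exact omega_le_c0 hω0 hc0 ξ hξ

theorem slope_le_cmod (hω : IsModulusOfContinuity ω)
    (hω0 : Tendsto ω (𝓝[>] (0:ℝ)) (𝓝 0)) {ξ : ℝ} (hξ : 0 < ξ) :
    ω ξ / ξ ≤ cmod ω :=
  le_csSup (bddAbove_slopes hω hω0) ⟨ξ, hξ, rfl⟩

theorem omega_le_cmod (hω : IsModulusOfContinuity ω)
    (hω0 : Tendsto ω (𝓝[>] (0:ℝ)) (𝓝 0)) {ξ : ℝ} (hξ : 0 < ξ) :
    ω ξ ≤ cmod ω * ξ := by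
  have := slope_le_cmod hω hω0 hξ
  rw [div_le_iff₀ hξ] at this
  linarith [this]

theorem cmod_pos (hω : IsModulusOfContinuity ω)
    (hω0 : Tendsto ω (𝓝[>] (0:ℝ)) (𝓝 0)) : 0 < cmod ω := by
  have h1 : ω 1 / 1 ≤ cmod ω := slope_le_cmod hω hω0 one_pos
  have := hω.pos 1 one_pos
  simpa using lt_of_lt_of_le (by simpa using this) h1

theorem slope_anti (hω : IsModulusOfContinuity ω)
    (hω0 : Tendsto ω (𝓝[>] (0:ℝ)) (𝓝 0)) :
    AntitoneOn (fun ξ => ω ξ / ξ) (Set.Ioi 0) := by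
  rintro a (ha : (0:ℝ) < a) b (hb : (0:ℝ) < b) hab
  rcases eq_or_lt_of_le hab with rfl | hab
  · exact le_refl _
  -- show ω a ≥ (a/b) * ω b
  have key : (a / b) * ω b ≤ ω a := by
    have hne : (𝓝[Set.Ioo (0:ℝ) a] 0).NeBot := left_nhdsWithin_Ioo_neBot ha
    have htend : Tendsto (fun ε => ((a - ε) / (b - ε)) * ω b) (𝓝[Set.Ioo (0:ℝ) a] 0)
        (𝓝 (((a - 0) / (b - 0)) * ω b)) := by
      apply Tendsto.mono_left _ nhdsWithin_le_nhds
      exact (((tendsto_const_nhds.sub tendsto_id).div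
        (tendsto_const_nhds.sub tendsto_id) (by simpa using hb.ne')).mul tendsto_const_nhds)
    have hev : ∀ ε ∈ Set.Ioo (0:ℝ) a, ((a - ε) / (b - ε)) * ω b ≤ ω a := by
      intro ε hε
      have hεb : ε < b := lt_trans hε.2 hab
      have hden : (0:ℝ) < b - ε := by linarith
      have hcomb : ((b - a) / (b - ε)) • ε + ((a - ε) / (b - ε)) • b = a := by
        rw [smul_eq_mul, smul_eq_mul, div_mul_eq_mul_div, div_mul_eq_mul_div, ← add_div,
          div_eq_iff hden.ne']
        ring
      have hμ : (0:ℝ) ≤ (b - a) / (b - ε) := div_nonneg (by linarith) hden.le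
      have hlam : (0:ℝ) ≤ (a - ε) / (b - ε) := by
        apply div_nonneg _ hden.le; linarith [hε.2]
      have hsum : (b - a) / (b - ε) + (a - ε) / (b - ε) = 1 := by
        rw [← add_div, div_eq_one_iff_eq hden.ne']; ring
      have hc := hω.concave.2 (Set.mem_Ioi.mpr hε.1) (Set.mem_Ioi.mpr hb) hμ hlam hsum
      rw [hcomb] at hc
      have hωε : 0 ≤ ω ε := (hω.pos ε hε.1).le
      have : ((b - a) / (b - ε)) * ω ε ≥ 0 := mul_nonneg hμ hωε
      simp only [smul_eq_mul] at hc
      linarith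
    have := le_of_tendsto htend (eventually_nhdsWithin_of_forall hev)
    simpa using this
  show ω b / b ≤ ω a / a
  rw [div_le_div_iff₀ hb ha]
  calc ω b * a = (a / b) * ω b * b := by field_simp
    _ ≤ ω a * b := by
        have := mul_le_mul_of_nonneg_right key hb.le
        linarith


theorem slope_tendsto (hω : IsModulusOfContinuity ω)
    (hω0 : Tendsto ω (𝓝[>] (0:ℝ)) (𝓝 0)) :
    Tendsto (fun ξ => ω ξ / ξ) (𝓝[>] (0:ℝ)) (𝓝 (cmod ω)) :=
  AntitoneOn.tendsto_nhdsGT (slope_anti hω hω0) (bddAbove_slopes hω hω0)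

/-- `Dr ξ ≤ slope(η, ξ)` for `0 < η < ξ`. -/
theorem Dr_le_slope (hω : IsModulusOfContinuity ω) {η ξ : ℝ} (hη : 0 < η) (hηξ : η < ξ) :
    Dr ω ξ ≤ (ω ξ - ω η) / (ξ - η) := by
  have hξ : 0 < ξ := hη.trans hηξ
  have h := (hasDerivWithinAt_iff_tendsto_slope (f := ω) (s := Set.Ici ξ) (x := ξ)
      (f' := Dr ω ξ)).mp (hDr hω hξ)
  have hset : Set.Ici ξ \ {ξ} = Set.Ioi ξ := Set.Ici_sdiff_left
  rw [hset] at h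
  have hne : (𝓝[Set.Ioi ξ] ξ).NeBot := nhdsGT_neBot ξ
  refine le_of_tendsto h (eventually_nhdsWithin_of_forall ?_)
  intro z hz
  have hz' : ξ < z := hz
  have := hω.concave.slope_anti_adjacent (Set.mem_Ioi.mpr hη)
    (Set.mem_Ioi.mpr (hξ.trans hz')) hηξ hz'
  rw [slope_def_field]
  calc (ω z - ω ξ) / (z - ξ) ≤ (ω ξ - ω η) / (ξ - η) := this

/-- `slope(η, ξ) ≤ Dr η` for `0 < η < ξ`. -/
theorem slope_le_Dr (hω : IsModulusOfContinuity ω) {η ξ : ℝ} (hη : 0 < η) (hηξ : η < ξ) :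
    (ω ξ - ω η) / (ξ - η) ≤ Dr ω η := by
  have h := (hasDerivWithinAt_iff_tendsto_slope (f := ω) (s := Set.Ici η) (x := η)
      (f' := Dr ω η)).mp (hDr hω hη)
  rw [Set.Ici_sdiff_left] at h
  have h' : Tendsto (slope ω η) (𝓝[Set.Ioo η ξ] η) (𝓝 (Dr ω η)) :=
    h.mono_left (nhdsWithin_mono _ Set.Ioo_subset_Ioi_self)
  have hne : (𝓝[Set.Ioo η ξ] η).NeBot := left_nhdsWithin_Ioo_neBot hηξ
  refine ge_of_tendsto h' (eventually_nhdsWithin_of_forall ?_)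
  intro z hz
  rw [slope_def_field]
  -- η < z < ξ ; slope(z,ξ) ≤ slope(η,z) ⇒ slope(η,ξ) ≤ slope(η,z)
  have hadj := hω.concave.slope_anti_adjacent (Set.mem_Ioi.mpr hη)
    (Set.mem_Ioi.mpr (hη.trans hηξ)) hz.1 hz.2
  have hp : (0:ℝ) < z - η := by linarith [hz.1]
  have hq : (0:ℝ) < ξ - z := by linarith [hz.2]
  rw [div_le_div_iff₀ (by linarith : (0:ℝ) < ξ - η) hp]
  rw [div_le_div_iff₀ hq hp] at hadj
  nlinarith [hadj]

/-- `Dr a ≤ ω a / a ≤ c`. -/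
theorem Dr_le_slope0 (hω : IsModulusOfContinuity ω)
    (hω0 : Tendsto ω (𝓝[>] (0:ℝ)) (𝓝 0)) {a : ℝ} (ha : 0 < a) :
    Dr ω a ≤ ω a / a := by
  have hne : (𝓝[Set.Ioo (0:ℝ) a] 0).NeBot := left_nhdsWithin_Ioo_neBot ha
  have htend : Tendsto (fun ε => (ω a - ω ε) / (a - ε)) (𝓝[Set.Ioo (0:ℝ) a] 0)
      (𝓝 ((ω a - 0) / (a - 0))) := by
    apply Tendsto.div
    · exact tendsto_const_nhds.sub (hω0.mono_left (nhdsWithin_mono _ Set.Ioo_subset_Ioi_self))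
    · exact (tendsto_const_nhds.sub tendsto_id).mono_left nhdsWithin_le_nhds
    · simpa using ha.ne'
  have hev : ∀ ε ∈ Set.Ioo (0:ℝ) a, Dr ω a ≤ (ω a - ω ε) / (a - ε) :=
    fun ε hε => Dr_le_slope hω hε.1 hε.2
  have := ge_of_tendsto htend (eventually_nhdsWithin_of_forall hev)
  simpa using this

theorem Dr_le_cmod (hω : IsModulusOfContinuity ω)
    (hω0 : Tendsto ω (𝓝[>] (0:ℝ)) (𝓝 0)) {a : ℝ} (ha : 0 < a) :
    Dr ω a ≤ cmod ω :=
  (Dr_le_slope0 hω hω0 ha).trans (slope_le_cmod hω hω0 ha)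

/-- good points are dense -/
theorem exists_good {S : Set ℝ} (hS : S.Countable) {u v : ℝ} (huv : u < v) :
    ∃ η ∈ Set.Ioo u v, η ∉ S := by
  by_contra h
  push_neg at h
  have hsub : Set.Ioo u v ⊆ S := fun x hx => h x hx
  have : volume (Set.Ioo u v) = 0 := measure_mono_null hsub (hS.measure_zero volume)
  rw [Real.volume_Ioo] at this
  simp only [ENNReal.ofReal_eq_zero] at this
  linarith

theorem key_quadratic (hω : IsModulusOfContinuity ω)
    (hω0 : Tendsto ω (𝓝[>] (0:ℝ)) (𝓝 0))
    (hω'' : Tendsto (fun ξ => deriv (deriv ω) ξ) (𝓝[>] (0:ℝ)) atBot)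
    {N : ℝ} (hN : 0 ≤ N) :
    ∃ δ > 0, ∀ ξ ∈ Set.Ioo (0:ℝ) δ, ω ξ ≤ cmod ω * ξ - N * ξ^2 := by
  obtain ⟨S, hSc, hSgood⟩ := hω.piecewiseC2
  -- δ from second derivative blow-up
  have hmem : {ξ : ℝ | deriv (deriv ω) ξ ≤ min (-2*N) (-1)} ∈ 𝓝[>] (0:ℝ) :=
    hω'' (eventually_le_atBot (min (-2*N) (-1)))
  rw [mem_nhdsGT_iff_exists_Ioo_subset] at hmem
  obtain ⟨δ, (hδ : (0:ℝ) < δ), hδsub⟩ := hmem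
  have hd2 : ∀ x ∈ Set.Ioo (0:ℝ) δ, deriv (deriv ω) x ≤ min (-2*N) (-1) :=
    fun x hx => hδsub hx
  have hgd : ∀ x ∈ Set.Ioo (0:ℝ) δ, DifferentiableAt ℝ (deriv ω) x := by
    intro x hx
    apply differentiableAt_of_deriv_ne_zero
    have := hd2 x hx
    have h1 : deriv (deriv ω) x ≤ -1 := this.trans (min_le_right _ _)
    intro h; rw [h] at h1; linarith
  -- the first derivative decreases fast
  have hgslope : ∀ a b : ℝ, a ∈ Set.Ioo (0:ℝ) δ → b ∈ Set.Ioo (0:ℝ) δ → a < b →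
      deriv ω b ≤ deriv ω a - 2*N*(b-a) := by
    intro a b ha hb hab
    have hIcc : Set.Icc a b ⊆ Set.Ioo (0:ℝ) δ := fun x hx =>
      ⟨lt_of_lt_of_le ha.1 hx.1, lt_of_le_of_lt hx.2 hb.2⟩
    have hcont : ContinuousOn (deriv ω) (Set.Icc a b) := fun x hx =>
      ((hgd x (hIcc hx)).continuousAt).continuousWithinAt
    have hdiff : DifferentiableOn ℝ (deriv ω) (Set.Ioo a b) := fun x hx =>
      (hgd x (hIcc (Set.Ioo_subset_Icc_self hx))).differentiableWithinAt
    obtain ⟨c, hc, hc2⟩ := exists_deriv_eq_slope (deriv ω) hab hcont hdiff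
    have := (hd2 c (hIcc (Set.Ioo_subset_Icc_self hc))).trans (min_le_left _ _)
    rw [hc2] at this
    rw [div_le_iff₀ (by linarith : (0:ℝ) < b - a)] at this
    nlinarith
  -- at good points, Dr = deriv
  have hDr_eq : ∀ x ∈ Set.Ioi (0:ℝ), x ∉ S → Dr ω x = deriv ω x := by
    intro x hx hxS
    have hca := hSgood x ⟨hx, hxS⟩
    have hdiff : DifferentiableAt ℝ ω x := hca.differentiableAt (by norm_num)
    exact hdiff.hasDerivAt.hasDerivWithinAt.derivWithin ((uniqueDiffOn_Ici x) x Set.self_mem_Ici)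
  -- the bound on Dr
  have hDbound : ∀ a ∈ Set.Ioo (0:ℝ) δ, a ∉ S → ∀ x, a ≤ x → x < δ →
      Dr ω x ≤ cmod ω - 2*N*(x - a) := by
    intro a ha haS x hax hxδ
    have hDa : Dr ω a ≤ cmod ω := Dr_le_cmod hω hω0 ha.1
    rcases eq_or_lt_of_le hax with rfl | hax
    · simpa using hDa
    · apply le_of_forall_pos_le_add
      intro ε hε
      have hε' : 0 < ε / (2*N+1) := by positivity
      set l := max a (x - ε / (2*N+1)) with hl
      have hlx : l < x := by
        apply max_lt hax; linarith
      obtain ⟨η, hη, hηS⟩ := exists_good hSc hlx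
      have hηa : a < η := lt_of_le_of_lt (le_max_left _ _) hη.1
      have hη0 : 0 < η := ha.1.trans hηa
      have hηδ : η < δ := hη.2.trans hxδ
      have h1 : Dr ω x ≤ (ω x - ω η) / (x - η) := Dr_le_slope hω hη0 hη.2
      have h2 : (ω x - ω η) / (x - η) ≤ Dr ω η := slope_le_Dr hω hη0 hη.2
      have h3 : Dr ω η = deriv ω η := hDr_eq η hη0 hηS
      have h4 : deriv ω η ≤ deriv ω a - 2*N*(η - a) := hgslope a η ha ⟨hη0, hηδ⟩ hηa
      have h5 : deriv ω a = Dr ω a := (hDr_eq a ha.1 haS).symm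
      have h6 : x - η ≤ ε / (2*N+1) := by
        have := le_max_right a (x - ε / (2*N+1))
        have : x - ε / (2*N+1) ≤ l := this
        linarith [hη.1, this]
      have h7 : 2*N*(x - η) ≤ ε := by
        rcases eq_or_lt_of_le hN with hN0 | hN0
        · rw [← hN0]; simpa using hε.le
        · have h2N : 2*N/(2*N+1) ≤ 1 := by
            rw [div_le_one (by linarith)]; linarith
          have := mul_le_mul_of_nonneg_left h6 (by linarith : (0:ℝ) ≤ 2*N)
          calc 2*N*(x-η) ≤ 2*N*(ε/(2*N+1)) := this
            _ = (2*N/(2*N+1)) * ε := by ring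
            _ ≤ 1 * ε := mul_le_mul_of_nonneg_right h2N hε.le
            _ = ε := one_mul ε
      linarith
  -- comparison on [a, ξ] for good a
  have hcomp : ∀ a ∈ Set.Ioo (0:ℝ) δ, a ∉ S → ∀ ξ ∈ Set.Ioo a δ,
      ω ξ ≤ ω a + cmod ω * (ξ - a) - N * (ξ - a)^2 := by
    intro a ha haS ξ hξ
    have haξ : a < ξ := hξ.1
    have key := image_le_of_deriv_right_le_deriv_boundary
      (f := ω) (f' := Dr ω) (a := a) (b := ξ)
      (B := fun u => ω a + cmod ω * (u - a) - N * (u - a)^2)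
      (B' := fun u => cmod ω - 2*N*(u - a))
      ?hf ?hf' ?ha ?hB ?hB' ?bound (Set.right_mem_Icc.mpr haξ.le)
    · simpa using key
    case hf =>
      apply hω.cont.mono
      intro x hx
      exact lt_of_lt_of_le ha.1 hx.1
    case hf' =>
      intro x hx
      exact hDr hω (lt_of_lt_of_le ha.1 hx.1)
    case ha => simp
    case hB => fun_prop
    case hB' =>
      intro x hx
      have h1 : HasDerivAt (fun u : ℝ => u - a) 1 x := (hasDerivAt_id x).sub_const a
      have h2 : HasDerivAt (fun u : ℝ => ω a + cmod ω * (u - a) - N * (u - a)^2)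
          (0 + cmod ω * 1 - N * (2 * (x - a)^1 * 1)) x := by
        exact ((hasDerivAt_const x (ω a)).add (h1.const_mul (cmod ω))).sub
          ((h1.pow 2).const_mul N)
      have h3 : (0 + cmod ω * 1 - N * (2 * (x - a)^1 * 1)) = cmod ω - 2*N*(x - a) := by ring
      rw [h3] at h2
      exact h2.hasDerivWithinAt
    case bound =>
      intro x hx
      exact hDbound a ha haS x hx.1 (lt_of_lt_of_le hx.2 hξ.2.le)
  -- conclude by letting a → 0 along good points
  refine ⟨δ, hδ, ?_⟩
  intro ξ hξ
  have hseq : ∀ n : ℕ, ∃ a : ℝ, a ∈ Set.Ioo (0:ℝ) (min ξ (1/(n+1))) ∧ a ∉ S := by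
    intro n
    have hpos : (0:ℝ) < min ξ (1/(n+1)) := lt_min hξ.1 (by positivity)
    obtain ⟨η, hη, hηS⟩ := exists_good hSc hpos
    exact ⟨η, hη, hηS⟩
  choose a haIoo haS using hseq
  have ha_pos : ∀ n, 0 < a n := fun n => (haIoo n).1
  have ha_ltξ : ∀ n, a n < ξ := fun n => lt_of_lt_of_le (haIoo n).2 (min_le_left _ _)
  have ha_lt : ∀ n, a n < 1/(n+1) := fun n => lt_of_lt_of_le (haIoo n).2 (min_le_right _ _)
  have ha_tend : Tendsto a atTop (𝓝 0) := by
    apply squeeze_zero (fun n => (ha_pos n).le) (fun n => (ha_lt n).le)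
    exact tendsto_one_div_add_atTop_nhds_zero_nat
  have hωa_tend : Tendsto (fun n => ω (a n)) atTop (𝓝 0) := by
    apply hω0.comp
    rw [tendsto_nhdsWithin_iff]
    exact ⟨ha_tend, Filter.Eventually.of_forall (fun n => ha_pos n)⟩
  have hstep : ∀ n, ω ξ ≤ ω (a n) + cmod ω * (ξ - a n) - N * (ξ - a n)^2 := by
    intro n
    exact hcomp (a n) ⟨ha_pos n, (ha_ltξ n).trans hξ.2⟩ (haS n) ξ ⟨ha_ltξ n, hξ.2⟩
  have hrhs : Tendsto (fun n => ω (a n) + cmod ω * (ξ - a n) - N * (ξ - a n)^2) atTop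
      (𝓝 (0 + cmod ω * (ξ - 0) - N * (ξ - 0)^2)) := by
    apply Tendsto.sub
    · exact hωa_tend.add (tendsto_const_nhds.mul (tendsto_const_nhds.sub ha_tend))
    · exact tendsto_const_nhds.mul ((tendsto_const_nhds.sub ha_tend).pow 2)
  have := ge_of_tendsto hrhs (Filter.Eventually.of_forall hstep)
  simpa using this

theorem grad_lt (hω : IsModulusOfContinuity ω)
    (hω0 : Tendsto ω (𝓝[>] (0:ℝ)) (𝓝 0))
    (hω'' : Tendsto (fun ξ => deriv (deriv ω) ξ) (𝓝[>] (0:ℝ)) atBot)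
    {f : V2 → ℝ} (hf : ContDiff ℝ (⊤ : ℕ∞) f) (hobeys : Obeys f ω) (x₀ : V2) :
    ‖fderiv ℝ f x₀‖ < cmod ω := by
  by_contra hcon
  push_neg at hcon
  set L := fderiv ℝ f x₀ with hL
  set b := ‖L‖ with hb
  have hbpos : 0 < b := lt_of_lt_of_le (cmod_pos hω hω0) hcon
  -- unit vector achieving the norm
  set v := (InnerProductSpace.toDual ℝ V2).symm L with hv
  have hvnorm : ‖v‖ = b := by
    rw [hv, hb, LinearIsometryEquiv.norm_map]
  have hvne : v ≠ 0 := by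
    intro h; rw [h] at hvnorm; simp at hvnorm; exact hbpos.ne (by rw [hvnorm])
  set e : V2 := ‖v‖⁻¹ • v with he
  have henorm : ‖e‖ = 1 := by
    rw [he, norm_smul, norm_inv, norm_norm, inv_mul_cancel₀ (norm_ne_zero_iff.mpr hvne)]
  have hLe : L e = b := by
    have h1 : L e = (inner ℝ v e : ℝ) := (InnerProductSpace.toDual_symm_apply).symm
    rw [h1, he, real_inner_smul_right, real_inner_self_eq_norm_sq]
    rw [hvnorm]
    field_simp
  -- the 1-D slice
  set ψ : ℝ → ℝ := fun h => f (x₀ + h • e) with hψ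
  have hγ : ∀ h : ℝ, HasDerivAt (fun s : ℝ => x₀ + s • e) e h := by
    intro h
    simpa using (((hasDerivAt_id h).smul_const e).const_add x₀)
  have hψC : ContDiff ℝ (⊤ : ℕ∞) ψ := by
    apply hf.comp
    exact contDiff_const.add (contDiff_id.smul contDiff_const)
  have hψd : ∀ h : ℝ, HasDerivAt ψ ((fderiv ℝ f (x₀ + h • e)) e) h := by
    intro h
    exact ((hf.differentiable (by simp) (x₀ + h • e)).hasFDerivAt).comp_hasDerivAt h (hγ h)
  have hψ0 : deriv ψ 0 = b := by
    have := hψd 0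
    simp only [zero_smul, add_zero] at this
    rw [this.deriv, ← hL, hLe]
  have hψdiff : Differentiable ℝ ψ := fun h => (hψd h).differentiableAt
  have hψC' : ContDiff ℝ (↑(⊤:ℕ∞)) ψ := hψC.of_le (by simp)
  have hdψC : ContDiff ℝ (↑(⊤:ℕ∞)) (deriv ψ) := (contDiff_infty_iff_deriv.mp hψC').2
  have hdψdiff : Differentiable ℝ (deriv ψ) := hdψC.differentiable (by simp)
  -- bound on the second derivative
  obtain ⟨C, hC⟩ := (isCompact_Icc (a := (-1:ℝ)) (b := 1)).exists_bound_of_continuousOn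
    ((contDiff_infty_iff_deriv.mp hdψC).2.continuous.continuousOn)
  set M := max C 1 with hM
  have hMpos : (0:ℝ) < M := lt_of_lt_of_le one_pos (le_max_right _ _)
  have hd2 : ∀ s ∈ Set.Icc (-1:ℝ) 1, |deriv (deriv ψ) s| ≤ M := by
    intro s hs
    exact le_trans (by simpa using hC s hs) (le_max_left _ _)
  -- derivative of ψ close to b near 0
  have hdψ_near : ∀ s ∈ Set.Icc (-1:ℝ) 1, |deriv ψ s - b| ≤ M * |s| := by
    intro s hs
    rcases lt_trichotomy s 0 with hs0 | rfl | hs0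
    · obtain ⟨ξ, hξ, hξ2⟩ := exists_deriv_eq_slope (deriv ψ) hs0
        (hdψdiff.continuous.continuousOn) (hdψdiff.differentiableOn)
      have hξI : ξ ∈ Set.Icc (-1:ℝ) 1 := ⟨le_trans hs.1 hξ.1.le, hξ.2.le.trans zero_le_one⟩
      have habs := hd2 ξ hξI
      rw [hξ2, abs_div] at habs
      have hden : (0:ℝ) < |0 - s| := by rw [zero_sub, abs_neg, abs_of_neg hs0]; linarith
      rw [div_le_iff₀ hden] at habs
      rw [← hψ0, abs_sub_comm]
      calc |deriv ψ 0 - deriv ψ s| ≤ M * |0 - s| := habs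
        _ = M * |s| := by rw [zero_sub, abs_neg]
    · simp [hψ0]
    · obtain ⟨ξ, hξ, hξ2⟩ := exists_deriv_eq_slope (deriv ψ) hs0
        (hdψdiff.continuous.continuousOn) (hdψdiff.differentiableOn)
      have hξI : ξ ∈ Set.Icc (-1:ℝ) 1 := ⟨le_trans (by norm_num) hξ.1.le, hξ.2.le.trans hs.2⟩
      have habs := hd2 ξ hξI
      rw [hξ2, abs_div] at habs
      have hden : (0:ℝ) < |s - 0| := by rw [sub_zero, abs_of_pos hs0]; linarith
      rw [div_le_iff₀ hden] at habs
      rw [← hψ0]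
      calc |deriv ψ s - deriv ψ 0| ≤ M * |s - 0| := habs
        _ = M * |s| := by rw [sub_zero]
  -- lower bound for the symmetric difference
  have hsym : ∀ h : ℝ, 0 < h → h ≤ 1 → 2*b*h - 2*M*h^2 ≤ ψ h - ψ (-h) := by
    intro h hh0 hh1
    have hder_ge : ∀ ξ ∈ Set.Ioo (-h) h, b - M*h ≤ deriv ψ ξ := by
      intro ξ hξ
      have hξI : ξ ∈ Set.Icc (-1:ℝ) 1 :=
        ⟨le_trans (neg_le_neg hh1) hξ.1.le, hξ.2.le.trans hh1⟩
      have hnear := hdψ_near ξ hξI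
      have h2 : |deriv ψ ξ - b| ≤ M * h := by
        refine hnear.trans (mul_le_mul_of_nonneg_left ?_ hMpos.le)
        rw [abs_le]
        exact ⟨neg_le_of_neg_le (neg_le_of_neg_le (by linarith [hξ.1])), hξ.2.le⟩
      linarith [(abs_le.mp h2).1]
    have hc1 : (b - M*h) * h ≤ ψ h - ψ 0 := by
      obtain ⟨ξ, hξ, hξ2⟩ := exists_deriv_eq_slope ψ hh0
        (hψdiff.continuous.continuousOn) (hψdiff.differentiableOn)
      have h1 : b - M*h ≤ (ψ h - ψ 0) / (h - 0) := by
        rw [← hξ2]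
        exact hder_ge ξ ⟨lt_trans (neg_neg_iff_pos.mpr hh0) hξ.1, hξ.2⟩
      rw [sub_zero] at h1
      calc (b - M*h) * h ≤ ((ψ h - ψ 0)/h) * h := mul_le_mul_of_nonneg_right h1 hh0.le
        _ = ψ h - ψ 0 := by field_simp
    have hc2 : (b - M*h) * h ≤ ψ 0 - ψ (-h) := by
      obtain ⟨ξ, hξ, hξ2⟩ := exists_deriv_eq_slope ψ (show -h < 0 by linarith)
        (hψdiff.continuous.continuousOn) (hψdiff.differentiableOn)
      have h1 : b - M*h ≤ (ψ 0 - ψ (-h)) / (0 - (-h)) := by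
        rw [← hξ2]
        exact hder_ge ξ ⟨hξ.1, lt_trans hξ.2 hh0⟩
      have h0h : (0:ℝ) - (-h) = h := by ring
      rw [h0h] at h1
      calc (b - M*h) * h ≤ ((ψ 0 - ψ (-h))/h) * h := mul_le_mul_of_nonneg_right h1 hh0.le
        _ = ψ 0 - ψ (-h) := by field_simp
    nlinarith [hc1, hc2]
  -- contradiction via the quadratic bound on ω
  obtain ⟨δ, hδ, hδq⟩ := key_quadratic hω hω0 hω'' (N := M) hMpos.le
  set h : ℝ := min 1 (δ/4) with hh
  have hh0 : 0 < h := lt_min one_pos (by linarith)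
  have hh1 : h ≤ 1 := min_le_left _ _
  have h2hδ : 2*h ∈ Set.Ioo (0:ℝ) δ := by
    constructor
    · linarith
    · have := min_le_right (1:ℝ) (δ/4)
      simp only [hh]
      linarith [this]
  have hxy_ne : x₀ + h • e ≠ x₀ - h • e := by
    intro hcontra
    have : (2*h) • e = 0 := by
      have := sub_eq_zero.mpr hcontra
      rw [show x₀ + h • e - (x₀ - h • e) = (2*h) • e by module] at this
      exact this
    rw [smul_eq_zero] at this
    rcases this with h1 | h1
    · linarith
    · rw [h1] at henorm; simp at henorm
  have hnorm_diff : ‖(x₀ + h • e) - (x₀ - h • e)‖ = 2*h := by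
    rw [show x₀ + h • e - (x₀ - h • e) = (2*h) • e by module, norm_smul, henorm]
    rw [mul_one, Real.norm_eq_abs, abs_of_pos (by linarith : (0:ℝ) < 2*h)]
  have hob := hobeys (x₀ + h • e) (x₀ - h • e) hxy_ne
  rw [hnorm_diff] at hob
  have hωb := hδq (2*h) h2hδ
  have hψval : f (x₀ + h • e) - f (x₀ - h • e) = ψ h - ψ (-h) := by
    simp only [hψ, neg_smul, sub_eq_add_neg]
  have hlower := hsym h hh0 hh1
  have habs : ψ h - ψ (-h) ≤ |f (x₀ + h • e) - f (x₀ - h • e)| := by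
    rw [hψval]; exact le_abs_self _
  have hcb : cmod ω ≤ b := hcon
  nlinarith [hob, hωb, hlower, habs, hh0, hMpos]

theorem intVec_apply (k : Fin 2 → ℤ) (i : Fin 2) : intVec k i = (k i : ℝ) := by
  fin_cases i <;> simp [intVec]

theorem abs_sub_round_le_abs (a : ℝ) : |a - round a| ≤ |a| := by
  rcases le_or_gt (1/2 : ℝ) |a| with h | h
  · exact (abs_sub_round a).trans h
  · have : round a = 0 := by
      rw [round_eq_zero_iff]
      constructor
      · linarith [neg_abs_le a]
      · linarith [le_abs_self a]
    rw [this]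
    simp

theorem norm_le_coord (u : V2) {r : ℝ} (hr : 0 ≤ r) (h : ∀ i, |u i| ≤ r) :
    ‖u‖ ≤ Real.sqrt 2 * r := by
  rw [EuclideanSpace.norm_eq]
  have hsum : ∑ i, ‖u i‖^2 ≤ 2 * r^2 := by
    rw [Fin.sum_univ_two]
    have h0 := h 0; have h1 := h 1
    have e0 : ‖u 0‖ = |u 0| := Real.norm_eq_abs _
    have e1 : ‖u 1‖ = |u 1| := Real.norm_eq_abs _
    nlinarith [abs_nonneg (u 0), abs_nonneg (u 1)]
  calc Real.sqrt (∑ i, ‖u i‖^2) ≤ Real.sqrt (2 * r^2) := Real.sqrt_le_sqrt hsum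
    _ = Real.sqrt 2 * r := by
        rw [Real.sqrt_mul (by norm_num), Real.sqrt_sq hr]

theorem norm_le_norm_coord (u w : V2) (h : ∀ i, |u i| ≤ |w i|) : ‖u‖ ≤ ‖w‖ := by
  rw [EuclideanSpace.norm_eq, EuclideanSpace.norm_eq]
  apply Real.sqrt_le_sqrt
  apply Finset.sum_le_sum
  intro i _
  rw [Real.norm_eq_abs, Real.norm_eq_abs]
  exact pow_le_pow_left₀ (abs_nonneg _) (h i) 2

theorem reduce (θ : V2 → ℝ → ℝ)
    (hper : ∀ t ≥ (0:ℝ), ∀ (x : V2) (k : Fin 2 → ℤ), θ (x + intVec k) t = θ x t)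
    {t : ℝ} (ht : 0 ≤ t) (x y : V2) :
    ∃ x' y' : V2, θ x' t - θ y' t = θ x t - θ y t ∧ ‖x' - y'‖ ≤ ‖x - y‖ ∧
      ‖x'‖ ≤ 3 ∧ ‖y'‖ ≤ 3 := by
  set kx : Fin 2 → ℤ := fun i => -⌊x i⌋ with hkx
  set ky : Fin 2 → ℤ := fun i => -⌊x i⌋ - round (y i - x i) with hky
  refine ⟨x + intVec kx, y + intVec ky, ?_, ?_, ?_, ?_⟩
  · rw [hper t ht x kx, hper t ht y ky]
  · apply norm_le_norm_coord
    intro i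
    have hxi : (x + intVec kx - (y + intVec ky)) i =
        -((y i - x i) - round (y i - x i)) := by
      simp only [PiLp.sub_apply, PiLp.add_apply, intVec_apply, hkx, hky]
      push_cast
      ring
    have hwi : (x - y) i = x i - y i := rfl
    rw [hxi, hwi, abs_neg, abs_sub_comm (x i) (y i)]
    exact abs_sub_round_le_abs _
  · apply le_trans (norm_le_coord _ (by norm_num : (0:ℝ) ≤ 1) ?_) ?_
    · intro i
      have : (x + intVec kx) i = Int.fract (x i) := by
        simp only [PiLp.add_apply, intVec_apply, hkx]
        push_cast
        simp only [Int.fract]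
        ring
      rw [this, abs_of_nonneg (Int.fract_nonneg _)]
      exact (Int.fract_lt_one _).le
    · nlinarith [Real.sq_sqrt (by norm_num : (0:ℝ) ≤ 2), Real.sqrt_nonneg 2]
  · apply le_trans (norm_le_coord _ (by norm_num : (0:ℝ) ≤ 3/2) ?_) ?_
    · intro i
      have h1 : (y + intVec ky) i = Int.fract (x i) - ((x i - y i) + round (y i - x i)) := by
        simp only [PiLp.add_apply, intVec_apply, hky]
        push_cast
        simp only [Int.fract]
        ring
      rw [h1]
      have hA : |Int.fract (x i)| ≤ 1 := by
        rw [abs_of_nonneg (Int.fract_nonneg _)]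
        exact (Int.fract_lt_one _).le
      have hB : |(x i - y i) + round (y i - x i)| ≤ 1/2 := by
        have : (x i - y i) + (round (y i - x i) : ℝ) = -((y i - x i) - round (y i - x i)) := by ring
        rw [this, abs_neg]
        exact abs_sub_round _
      calc |Int.fract (x i) - ((x i - y i) + (round (y i - x i) : ℝ))|
          ≤ |Int.fract (x i)| + |(x i - y i) + (round (y i - x i) : ℝ)| := abs_sub _ _
        _ ≤ 3/2 := by linarith
    · nlinarith [Real.sq_sqrt (by norm_num : (0:ℝ) ≤ 2), Real.sqrt_nonneg 2]

theorem not_obeys_reduce (hω : IsModulusOfContinuity ω) (θ : V2 → ℝ → ℝ)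
    (hper : ∀ t ≥ (0:ℝ), ∀ (x : V2) (k : Fin 2 → ℤ), θ (x + intVec k) t = θ x t)
    {t : ℝ} (ht : 0 ≤ t) (h : ¬ Obeys (fun x => θ x t) ω) :
    ∃ x y : V2, x ≠ y ∧ ‖x‖ ≤ 3 ∧ ‖y‖ ≤ 3 ∧ ω ‖x - y‖ ≤ |θ x t - θ y t| := by
  rw [Obeys] at h
  push_neg at h
  obtain ⟨x, y, hxy, hge⟩ := h
  obtain ⟨x', y', hdiff, hle, hx3, hy3⟩ := reduce θ hper ht x y
  have hxypos : 0 < ‖x - y‖ := by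
    exact norm_sub_pos_iff.mpr hxy
  have hne' : x' ≠ y' := by
    intro hcontra
    have h0 : θ x t - θ y t = 0 := by
      rw [← hdiff, hcontra]; ring
    rw [h0] at hge
    simp only [abs_zero] at hge
    exact absurd hge (not_le.mpr (hω.pos _ hxypos))
  have hpos' : 0 < ‖x' - y'‖ := norm_sub_pos_iff.mpr hne'
  refine ⟨x', y', hne', hx3, hy3, ?_⟩
  have hmono := hω.mono (Set.mem_Ioi.mpr hpos') (Set.mem_Ioi.mpr hxypos) hle
  calc ω ‖x' - y'‖ ≤ ω ‖x - y‖ := hmono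
    _ ≤ |θ x t - θ y t| := hge
    _ = |θ x' t - θ y' t| := by rw [hdiff]

theorem persistence (hω : IsModulusOfContinuity ω)
    (hω0 : Tendsto ω (𝓝[>] (0:ℝ)) (𝓝 0))
    (hω'' : Tendsto (fun ξ => deriv (deriv ω) ξ) (𝓝[>] (0:ℝ)) atBot)
    (θ : V2 → ℝ → ℝ)
    (hθ : ContDiffOn ℝ (⊤ : ℕ∞) (fun q : V2 × ℝ => θ q.1 q.2) (Set.univ ×ˢ Set.Ici 0))
    (hper : ∀ t ≥ (0:ℝ), ∀ (x : V2) (k : Fin 2 → ℤ), θ (x + intVec k) t = θ x t)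
    {t₀ : ℝ} (ht₀ : 0 ≤ t₀) (hob : Obeys (fun x => θ x t₀) ω) :
    ∃ ε > 0, ∀ t, 0 ≤ t → |t - t₀| ≤ ε → Obeys (fun x => θ x t) ω := by
  set Θ : V2 × ℝ → ℝ := fun q => θ q.1 q.2 with hΘ
  set s : Set (V2 × ℝ) := Set.univ ×ˢ Set.Ici 0 with hs
  have hUD : UniqueDiffOn ℝ s := uniqueDiffOn_univ.prod (uniqueDiffOn_Ici 0)
  have hmem : ∀ (x : V2) (t : ℝ), 0 ≤ t → (x, t) ∈ s := fun x t ht =>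
    ⟨Set.mem_univ x, ht⟩
  -- the spatial fderiv, jointly continuous
  set J : V2 →L[ℝ] (V2 × ℝ) := (ContinuousLinearMap.id ℝ V2).prod 0 with hJ
  set F : V2 × ℝ → (V2 →L[ℝ] ℝ) := fun q => (fderivWithin ℝ Θ s q).comp J with hF
  have hFcont : ContinuousOn F s := by
    have h1 : ContinuousOn (fderivWithin ℝ Θ s) s :=
      hθ.continuousOn_fderivWithin hUD (by simp)
    have h2 : Continuous (fun L : (V2 × ℝ) →L[ℝ] ℝ => L.comp J) :=
      ((ContinuousLinearMap.compL ℝ V2 (V2 × ℝ) ℝ).flip J).continuous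
    exact h2.comp_continuousOn h1
  have hι : ∀ (t : ℝ) (x : V2), HasFDerivAt (fun z : V2 => (z, t)) J x := fun t x =>
    (hasFDerivAt_id x).prodMk (hasFDerivAt_const t x)
  have hslice_fderiv : ∀ (x : V2) (t : ℝ), 0 ≤ t →
      HasFDerivAt (fun z => θ z t) (F (x, t)) x := by
    intro x t ht
    have hdw : DifferentiableWithinAt ℝ Θ s (x, t) :=
      (hθ.differentiableOn (by simp)) _ (hmem x t ht)
    have hcomp := HasFDerivWithinAt.comp (t := s) x hdw.hasFDerivWithinAt
      ((hι t x).hasFDerivWithinAt (s := Set.univ))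
      (fun z _ => hmem z t ht)
    rw [hasFDerivWithinAt_univ] at hcomp
    exact hcomp
  have hslC : ∀ t : ℝ, 0 ≤ t → ContDiff ℝ (⊤ : ℕ∞) (fun z => θ z t) := by
    intro t ht
    rw [← contDiffOn_univ]
    exact hθ.comp ((contDiff_id.prodMk contDiff_const).contDiffOn) (fun z _ => hmem z t ht)
  -- contradiction setup
  by_contra hcon
  push_neg at hcon
  have hseq : ∀ n : ℕ, ∃ t : ℝ, 0 ≤ t ∧ |t - t₀| ≤ 1/(n+1) ∧
      ¬ Obeys (fun x => θ x t) ω := by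
    intro n
    obtain ⟨t, ht1, ht2, ht3⟩ := hcon (1/(n+1)) (by positivity)
    exact ⟨t, ht1, ht2, ht3⟩
  choose t ht0 htcl htbad using hseq
  have ht_tend : Tendsto t atTop (𝓝 t₀) := by
    rw [tendsto_iff_dist_tendsto_zero]
    apply squeeze_zero (fun n => dist_nonneg) (fun n => ?_)
      tendsto_one_div_add_atTop_nhds_zero_nat
    rw [Real.dist_eq]; exact htcl n
  have hpair : ∀ n : ℕ, ∃ p : V2 × V2, p.1 ≠ p.2 ∧ ‖p.1‖ ≤ 3 ∧ ‖p.2‖ ≤ 3 ∧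
      ω ‖p.1 - p.2‖ ≤ |θ p.1 (t n) - θ p.2 (t n)| := by
    intro n
    obtain ⟨x, y, h1, h2, h3, h4⟩ := not_obeys_reduce hω θ hper (ht0 n) (htbad n)
    exact ⟨(x, y), h1, h2, h3, h4⟩
  choose p hpne hp1 hp2 hpge using hpair
  have hK : IsCompact ((Metric.closedBall (0:V2) 3) ×ˢ (Metric.closedBall (0:V2) 3)) :=
    (isCompact_closedBall _ _).prod (isCompact_closedBall _ _)
  have hpK : ∀ n, p n ∈ (Metric.closedBall (0:V2) 3) ×ˢ (Metric.closedBall (0:V2) 3) := by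
    intro n
    constructor <;> rw [Metric.mem_closedBall, dist_zero_right]
    exacts [hp1 n, hp2 n]
  obtain ⟨q, hqK, φ, hφmono, hφtend⟩ := hK.tendsto_subseq hpK
  set x₀ := q.1 with hx₀
  set y₀ := q.2 with hy₀
  have hxtend : Tendsto (fun n => (p (φ n)).1) atTop (𝓝 x₀) :=
    (continuous_fst.tendsto q).comp hφtend
  have hytend : Tendsto (fun n => (p (φ n)).2) atTop (𝓝 y₀) :=
    (continuous_snd.tendsto q).comp hφtend
  have httend : Tendsto (fun n => t (φ n)) atTop (𝓝 t₀) :=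
    ht_tend.comp hφmono.tendsto_atTop
  -- joint continuity of θ along the sequences
  have hθcont : ContinuousOn Θ s := hθ.continuousOn
  have hθtend : ∀ (z : ℕ → V2) (z₀ : V2), Tendsto z atTop (𝓝 z₀) →
      Tendsto (fun n => θ (z n) (t (φ n))) atTop (𝓝 (θ z₀ t₀)) := by
    intro z z₀ hz
    have h1 : Tendsto (fun n => ((z n, t (φ n)) : V2 × ℝ)) atTop (𝓝[s] (z₀, t₀)) := by
      rw [tendsto_nhdsWithin_iff]
      exact ⟨hz.prodMk_nhds httend, Filter.Eventually.of_forall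
        (fun n => hmem (z n) (t (φ n)) (ht0 (φ n)))⟩
    exact ((hθcont (z₀, t₀) (hmem z₀ t₀ ht₀)).tendsto).comp h1
  -- distance sequence
  set d : ℕ → ℝ := fun n => ‖(p (φ n)).1 - (p (φ n)).2‖ with hd
  have hdpos : ∀ n, 0 < d n := fun n => norm_sub_pos_iff.mpr (hpne (φ n))
  have hdtend : Tendsto d atTop (𝓝 ‖x₀ - y₀‖) :=
    (continuous_norm.tendsto _).comp (hxtend.sub hytend)
  rcases eq_or_ne x₀ y₀ with heq | hne
  · -- collapse to the diagonal: gradient contradiction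
    have hd0 : Tendsto d atTop (𝓝 0) := by
      rw [heq] at hdtend; simpa using hdtend
    set G' : ℝ := ‖F (x₀, t₀)‖ with hG'
    have hclaim : cmod ω ≤ G' := by
      apply le_of_forall_pos_le_add
      intro ε hε
      -- continuity of F at (x₀, t₀) within s
      have hcw : ContinuousWithinAt F s (x₀, t₀) := hFcont _ (hmem x₀ t₀ ht₀)
      rw [Metric.continuousWithinAt_iff] at hcw
      obtain ⟨η, hη, hηprop⟩ := hcw ε hε
      -- eventually all points are close
      have hevx : ∀ᶠ n in atTop, dist (p (φ n)).1 x₀ < η/2 :=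
        hxtend (Metric.ball_mem_nhds x₀ (by linarith))
      have hevy : ∀ᶠ n in atTop, dist (p (φ n)).2 x₀ < η/2 := by
        have : Tendsto (fun n => (p (φ n)).2) atTop (𝓝 x₀) := by rw [heq]; exact hytend
        exact this (Metric.ball_mem_nhds x₀ (by linarith))
      have hevt : ∀ᶠ n in atTop, dist (t (φ n)) t₀ < η/2 :=
        httend (Metric.ball_mem_nhds t₀ (by linarith))
      have hevle : ∀ᶠ n in atTop, ω (d n) / d n ≤ G' + ε := by
        filter_upwards [hevx, hevy, hevt] with n hnx hny hnt
        -- gradient bound on the closed ball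
        have hball : ∀ z ∈ Metric.closedBall x₀ (η/2), ‖F (z, t (φ n))‖ ≤ G' + ε := by
          intro z hz
          have hzs : (z, t (φ n)) ∈ s := hmem z _ (ht0 (φ n))
          have hdist : dist ((z, t (φ n)) : V2 × ℝ) (x₀, t₀) < η := by
            rw [Prod.dist_eq]
            apply max_lt
            · exact lt_of_le_of_lt (Metric.mem_closedBall.mp hz) (by linarith)
            · exact lt_of_lt_of_le hnt (by linarith)
          have := hηprop hzs hdist
          have h2 : ‖F (z, t (φ n)) - F (x₀, t₀)‖ < ε := by
            rw [dist_eq_norm] at this; exact this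
          calc ‖F (z, t (φ n))‖ ≤ ‖F (x₀, t₀)‖ + ‖F (z, t (φ n)) - F (x₀, t₀)‖ := by
                have := norm_sub_norm_le (F (z, t (φ n))) (F (x₀, t₀))
                linarith [abs_le.mp (abs_norm_sub_norm_le (F (z, t (φ n))) (F (x₀, t₀)))]
            _ ≤ G' + ε := by rw [← hG']; linarith
        have hmvt := Convex.norm_image_sub_le_of_norm_fderiv_le
          (f := fun z => θ z (t (φ n))) (C := G' + ε)
          (s := Metric.closedBall x₀ (η/2))
          (fun z hz => (hslice_fderiv z (t (φ n)) (ht0 (φ n))).differentiableAt)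
          (fun z hz => by
            rw [(hslice_fderiv z (t (φ n)) (ht0 (φ n))).fderiv]
            exact hball z hz)
          (convex_closedBall _ _)
          (Metric.mem_closedBall.mpr hny.le)
          (Metric.mem_closedBall.mpr hnx.le)
        -- hmvt : ‖θ x1 - θ y1‖ ≤ (G'+ε) * ‖x1 - y1‖
        have hge := hpge (φ n)
        rw [div_le_iff₀ (hdpos n)]
        calc ω (d n) ≤ |θ (p (φ n)).1 (t (φ n)) - θ (p (φ n)).2 (t (φ n))| := hge
          _ ≤ (G' + ε) * d n := by
              rw [← Real.norm_eq_abs]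
              exact hmvt
      -- pass to the limit
      have hslope_tend : Tendsto (fun n => ω (d n) / d n) atTop (𝓝 (cmod ω)) := by
        apply (slope_tendsto hω hω0).comp
        rw [tendsto_nhdsWithin_iff]
        exact ⟨hd0, Filter.Eventually.of_forall (fun n => hdpos n)⟩
      exact le_of_tendsto hslope_tend hevle
    -- contradiction with grad_lt
    have hG'eq : G' = ‖fderiv ℝ (fun z => θ z t₀) x₀‖ := by
      rw [(hslice_fderiv x₀ t₀ ht₀).fderiv]
    have := grad_lt hω hω0 hω'' (hslC t₀ ht₀) hob x₀
    rw [← hG'eq] at this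
    linarith
  · -- limit pair violates strict inequality
    have hd₀pos : 0 < ‖x₀ - y₀‖ := norm_sub_pos_iff.mpr hne
    have hωtend : Tendsto (fun n => ω (d n)) atTop (𝓝 (ω ‖x₀ - y₀‖)) := by
      have hctsat : ContinuousAt ω ‖x₀ - y₀‖ :=
        (hω.cont.continuousAt (Ioi_mem_nhds hd₀pos))
      exact hctsat.tendsto.comp hdtend
    have habstend : Tendsto (fun n => |θ (p (φ n)).1 (t (φ n)) - θ (p (φ n)).2 (t (φ n))|)
        atTop (𝓝 (|θ x₀ t₀ - θ y₀ t₀|)) := by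
      have h1 := hθtend _ _ hxtend
      have h2 := hθtend _ _ hytend
      exact (continuous_abs.tendsto _).comp (h1.sub h2)
    have hlim : ω ‖x₀ - y₀‖ ≤ |θ x₀ t₀ - θ y₀ t₀| :=
      le_of_tendsto_of_tendsto' hωtend habstend (fun n => hpge (φ n))
    exact absurd hlim (not_le.mpr (hob x₀ y₀ hne))
end BT

/-- **Breakthrough scenario.** Let `ω` be a modulus of continuity with `ω(0+) = 0` (and
`ω''(0+) = -∞`). Let `θ` be jointly smooth on `ℝ² × [0,∞)`, `ℤ²`-periodic in space, with
`θ(·,0)` obeying `ω`. If the solution violates `ω` at some positive time, then there are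
`t₁ > 0` and `x ≠ y` with `θ(x,t₁) - θ(y,t₁) = ω(|x-y|)`, and `θ(·,t)` obeys `ω` for
every `0 ≤ t < t₁`. -/
theorem breakthrough_scenario
    (ω : ℝ → ℝ) (hω : IsModulusOfContinuity ω)
    (hω0 : Tendsto ω (𝓝[>] (0:ℝ)) (𝓝 0))
    (hω'' : Tendsto (fun ξ => deriv (deriv ω) ξ) (𝓝[>] (0:ℝ)) atBot)
    (θ : V2 → ℝ → ℝ)
    (hθ : ContDiffOn ℝ (⊤ : ℕ∞) (fun q : V2 × ℝ => θ q.1 q.2) (univ ×ˢ Ici 0))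
    (hper : ∀ t ≥ (0:ℝ), ∀ (x : V2) (k : Fin 2 → ℤ), θ (x + intVec k) t = θ x t)
    (h0 : Obeys (fun x => θ x 0) ω)
    (hviol : ∃ t > (0:ℝ), ¬ Obeys (fun x => θ x t) ω) :
    ∃ t₁ > (0:ℝ), (∃ x y : V2, x ≠ y ∧ θ x t₁ - θ y t₁ = ω ‖x - y‖) ∧
      ∀ t : ℝ, 0 ≤ t → t < t₁ → Obeys (fun x => θ x t) ω := by
  classical
  set Bad : Set ℝ := {t | 0 ≤ t ∧ ¬ Obeys (fun x => θ x t) ω} with hBadDef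
  obtain ⟨tv, htv0, htvbad⟩ := hviol
  have hBadne : Bad.Nonempty := ⟨tv, htv0.le, htvbad⟩
  have hBadbdd : BddBelow Bad := ⟨0, fun t ht => ht.1⟩
  set t₁ := sInf Bad with ht₁def
  have ht₁0 : 0 ≤ t₁ := le_csInf hBadne (fun t ht => ht.1)
  have hbefore : ∀ t, 0 ≤ t → t < t₁ → Obeys (fun x => θ x t) ω := by
    intro t ht htlt
    by_contra hbad
    exact absurd (csInf_le hBadbdd ⟨ht, hbad⟩) (not_le.mpr htlt)
  obtain ⟨ε₀, hε₀, hε₀prop⟩ := BT.persistence hω hω0 hω'' θ hθ hper le_rfl h0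
  have ht₁pos : 0 < t₁ := by
    have hle : ∀ t ∈ Bad, ε₀ ≤ t := by
      intro t ht
      by_contra hlt
      push_neg at hlt
      have : Obeys (fun x => θ x t) ω := by
        apply hε₀prop t ht.1
        rw [sub_zero, abs_of_nonneg ht.1]
        exact hlt.le
      exact ht.2 this
    exact lt_of_lt_of_le hε₀ (le_csInf hBadne hle)
  by_cases hOb : Obeys (fun x => θ x t₁) ω
  · -- impossible: the solution would obey slightly beyond t₁
    exfalso
    obtain ⟨ε, hε, hprop⟩ := BT.persistence hω hω0 hω'' θ hθ hper ht₁0 hOb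
    have hex : ∃ tb ∈ Bad, tb < t₁ + ε := by
      by_contra h
      push_neg at h
      have : t₁ + ε ≤ t₁ := le_csInf hBadne h
      linarith
    obtain ⟨tb, hbad, hlt⟩ := hex
    have htb1 : t₁ ≤ tb := csInf_le hBadbdd hbad
    have : Obeys (fun x => θ x tb) ω :=
      hprop tb hbad.1 (abs_le.mpr ⟨by linarith, by linarith⟩)
    exact hbad.2 this
  · rw [Obeys] at hOb
    push_neg at hOb
    obtain ⟨x, y, hxy, hge⟩ := hOb
    have hpair : ∃ a b : V2, a ≠ b ∧ ω ‖a - b‖ ≤ θ a t₁ - θ b t₁ := by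
      rcases le_or_gt 0 (θ x t₁ - θ y t₁) with hpos | hneg
      · exact ⟨x, y, hxy, by rwa [abs_of_nonneg hpos] at hge⟩
      · refine ⟨y, x, hxy.symm, ?_⟩
        rw [norm_sub_rev]
        rw [abs_of_neg hneg] at hge
        linarith
    obtain ⟨a, b, hab, hgeq⟩ := hpair
    rcases eq_or_lt_of_le hgeq with heq | hstrict
    · exact ⟨t₁, ht₁pos, ⟨a, b, hab, heq.symm⟩, hbefore⟩
    · -- strict violation at t₁ propagates backwards, contradicting minimality
      exfalso
      have hcont : ContinuousOn (fun t => θ a t - θ b t) (Ici 0) := by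
        have hca : ∀ z : V2, ContinuousOn (fun t : ℝ => θ z t) (Ici 0) := by
          intro z
          have hmap : Set.MapsTo (fun t : ℝ => ((z, t) : V2 × ℝ)) (Ici 0) (univ ×ˢ Ici 0) :=
            fun u hu => ⟨Set.mem_univ z, hu⟩
          have hic : ContinuousOn (fun t : ℝ => ((z, t) : V2 × ℝ)) (Ici 0) :=
            (Continuous.continuousOn (by fun_prop))
          have := ContinuousOn.comp (hθ.continuousOn) hic hmap
          exact this
        exact (hca a).sub (hca b)
      have hne : (𝓝[Set.Ico 0 t₁] t₁).NeBot := by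
        have h1 : (𝓝[Set.Ioo 0 t₁] t₁).NeBot := right_nhdsWithin_Ioo_neBot ht₁pos
        exact h1.mono (nhdsWithin_mono _ Set.Ioo_subset_Ico_self)
      have htd : Tendsto (fun t => θ a t - θ b t) (𝓝[Set.Ico 0 t₁] t₁)
          (𝓝 (θ a t₁ - θ b t₁)) := by
        have := (hcont t₁ ht₁0).tendsto
        exact this.mono_left (nhdsWithin_mono _ (fun u hu => hu.1))
      have hev : ∀ᶠ u in 𝓝[Set.Ico 0 t₁] t₁, ω ‖a - b‖ < θ a u - θ b u :=
        htd (Ioi_mem_nhds hstrict)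
      obtain ⟨u, hu1, hu2⟩ := (hev.and self_mem_nhdsWithin).exists
      have hubad : u ∈ Bad := by
        refine ⟨hu2.1, ?_⟩
        intro hob
        have := hob a b hab
        rw [abs_lt] at this
        linarith [this.2, hu1]
      have := csInf_le hBadbdd hubad
      linarith [hu2.2]
end
end

section
/- Let α > 0 and let m : (0,∞) → (0,∞) be such that r^α·m(r) is non-increasing. Then for every δ > 0, ∫_0^δ (3 + ln(δ/η)) / (η m(η)) dη ≤ C_α / m(δ), where C_α = (1 + 3α)/α². -/
open MeasureTheory Set Real Filter Topology

/-!
Monotonicity of `r ^ α * m r` gives `1 / (η m(η)) ≤ η ^ (α - 1) / (δ ^ α m(δ))` for `η ≤ δ`,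
which reduces the claim to
`∫₀^δ (3 + log (δ / η)) η ^ (α - 1) dη = (3 / α + 1 / α ^ 2) δ ^ α`.
This follows from the fundamental theorem of calculus with the primitive
`η ^ α / α * (3 + log (δ / η) + 1 / α)`, which tends to `0` at `0⁺` since `η ^ α log η → 0`.
-/

noncomputable def logRpowPrimitive (α δ c η : ℝ) : ℝ :=
  η ^ α / α * (c + log (δ / η) + 1 / α)

section

variable {α δ : ℝ} (c : ℝ)

lemma hasDerivAt_logRpowPrimitive (hα : α ≠ 0) (hδ : δ ≠ 0) {x : ℝ} (hx : x ≠ 0) :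
    HasDerivAt (logRpowPrimitive α δ c) ((c + log (δ / x)) * x ^ (α - 1)) x := by
  have hpow : HasDerivAt (fun η : ℝ => η ^ α) (α * x ^ (α - 1)) x :=
    hasDerivAt_rpow_const (Or.inl hx)
  have hlog : HasDerivAt (fun η : ℝ => log (δ / η)) (-x⁻¹) x := by
    have h := (hasDerivAt_log hx).const_sub (log δ)
    refine h.congr_of_eventuallyEq ?_
    filter_upwards [isOpen_ne.mem_nhds hx] with y hy
    rw [log_div hδ hy]
  refine ((hpow.div_const α).mul ((hlog.const_add c).add_const (1 / α))).congr_deriv ?_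
  rw [rpow_sub_one hx]
  field_simp
  ring

lemma tendsto_logRpowPrimitive_nhdsGT_zero (hα : 0 < α) (hδ : δ ≠ 0) :
    Tendsto (logRpowPrimitive α δ c) (𝓝[>] 0) (𝓝 0) := by
  have hpow : Tendsto (fun η : ℝ => η ^ α) (𝓝[>] 0) (𝓝 0) := by
    simpa [zero_rpow hα.ne'] using
      (continuousAt_rpow_const 0 α (Or.inr hα.le)).tendsto.mono_left nhdsWithin_le_nhds
  have h := ((hpow.div_const α).mul_const (c + log δ + 1 / α)).sub
    ((tendsto_log_mul_rpow_nhdsGT_zero hα).div_const α)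
  simp only [zero_div, zero_mul, sub_zero] at h
  refine h.congr' ?_
  filter_upwards [self_mem_nhdsWithin] with η (hη : 0 < η)
  rw [logRpowPrimitive, log_div hδ hη.ne']
  ring

lemma continuousOn_logRpowPrimitive (hα : 0 < α) (hδ : 0 < δ) :
    ContinuousOn (logRpowPrimitive α δ c) (Icc 0 δ) := by
  intro x hx
  rcases hx.1.eq_or_lt with rfl | hx0
  · have h0 : logRpowPrimitive α δ c 0 = 0 := by simp [logRpowPrimitive, zero_rpow hα.ne']
    have h : ContinuousWithinAt (logRpowPrimitive α δ c) (Ioi 0) 0 := by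
      rw [ContinuousWithinAt, h0]
      exact tendsto_logRpowPrimitive_nhdsGT_zero c hα hδ.ne'
    exact (continuousWithinAt_Ioi_iff_Ici.1 h).mono Icc_subset_Ici_self
  · exact (hasDerivAt_logRpowPrimitive c hα.ne' hδ.ne' hx0.ne').continuousAt.continuousWithinAt

theorem lintegral_Ioo_add_log_div_mul_rpow (hα : 0 < α) (hδ : 0 < δ) (hc : 0 ≤ c) :
    ∫⁻ η in Ioo 0 δ, ENNReal.ofReal ((c + log (δ / η)) * η ^ (α - 1))
      = ENNReal.ofReal ((c / α + 1 / α ^ 2) * δ ^ α) := by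
  have hcont := continuousOn_logRpowPrimitive c hα hδ
  have hderiv : ∀ x ∈ Ioo 0 δ,
      HasDerivAt (logRpowPrimitive α δ c) ((c + log (δ / x)) * x ^ (α - 1)) x :=
    fun x hx => hasDerivAt_logRpowPrimitive c hα.ne' hδ.ne' hx.1.ne'
  have hnonneg : ∀ x ∈ Ioc 0 δ, 0 ≤ (c + log (δ / x)) * x ^ (α - 1) := fun x hx =>
    mul_nonneg (add_nonneg hc (log_nonneg ((one_le_div hx.1).2 hx.2)))
      (rpow_nonneg hx.1.le _)
  have hint := intervalIntegral.integrableOn_deriv_of_nonneg hcont hderiv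
    fun x hx => hnonneg x (Ioo_subset_Ioc_self hx)
  rw [setLIntegral_congr Ioo_ae_eq_Ioc,
    ← ofReal_integral_eq_lintegral_ofReal hint ((ae_restrict_iff' measurableSet_Ioc).2
      (Eventually.of_forall hnonneg)),
    ← intervalIntegral.integral_of_le hδ.le,
    intervalIntegral.integral_eq_sub_of_hasDerivAt_of_le hδ.le hcont hderiv
      ((intervalIntegrable_iff_integrableOn_Ioc_of_le hδ.le).2 hint)]
  simp only [logRpowPrimitive, div_self hδ.ne', log_one, zero_rpow hα.ne', zero_div, zero_mul,
    sub_zero]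
  congr 1
  field_simp
  ring

end

lemma inv_mul_le_rpow_sub_one_mul_inv_of_antitoneOn {α : ℝ} {m : ℝ → ℝ}
    (hm_pos : ∀ r > (0:ℝ), 0 < m r) (hm_decay : AntitoneOn (fun r => r ^ α * m r) (Ioi 0))
    {η δ : ℝ} (hη : 0 < η) (hηδ : η ≤ δ) :
    (η * m η)⁻¹ ≤ η ^ (α - 1) * (δ ^ α * m δ)⁻¹ := by
  have hδ : 0 < δ := hη.trans_le hηδ
  have hanti : δ ^ α * m δ ≤ η ^ α * m η := hm_decay hη hδ hηδ
  rw [← div_eq_mul_inv, le_div_iff₀ (mul_pos (rpow_pos_of_pos hδ α) (hm_pos δ hδ)),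
    rpow_sub_one hη.ne']
  calc (η * m η)⁻¹ * (δ ^ α * m δ) ≤ (η * m η)⁻¹ * (η ^ α * m η) := by
        gcongr
        exact inv_nonneg.2 (mul_pos hη (hm_pos η hη)).le
    _ = η ^ α / η := by field_simp [(hm_pos η hη).ne']

/-- **A weighted integral bound.** If `α > 0` and `r^α m(r)` is non-increasing on
`(0,∞)`, then for every `δ > 0`,
`∫_0^δ (3 + ln(δ/η)) / (η m(η)) dη ≤ C_α / m(δ)` with `C_α = (1+3α)/α²`. -/
theorem weighted_integral_bound
    (α : ℝ) (hα : 0 < α) (m : ℝ → ℝ)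
    (hm_pos : ∀ r > (0:ℝ), 0 < m r)
    (hm_decay : AntitoneOn (fun r => r ^ α * m r) (Ioi 0)) :
    ∀ δ > (0:ℝ),
      ∫⁻ η in Ioo (0:ℝ) δ, ENNReal.ofReal ((3 + Real.log (δ / η)) / (η * m η))
        ≤ ENNReal.ofReal (((1 + 3 * α) / α ^ 2) / m δ) := by
  intro δ hδ
  calc ∫⁻ η in Ioo (0:ℝ) δ, ENNReal.ofReal ((3 + log (δ / η)) / (η * m η))
      ≤ ∫⁻ η in Ioo (0:ℝ) δ,
          ENNReal.ofReal ((3 + log (δ / η)) * η ^ (α - 1)) *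
            ENNReal.ofReal (δ ^ α * m δ)⁻¹ := by
        refine setLIntegral_mono' measurableSet_Ioo fun η hη => ?_
        have hlog : 0 ≤ 3 + log (δ / η) :=
          add_nonneg zero_le_three (log_nonneg ((one_le_div hη.1).2 hη.2.le))
        rw [← ENNReal.ofReal_mul (mul_nonneg hlog (rpow_nonneg hη.1.le _)), mul_assoc,
          div_eq_mul_inv]
        gcongr
        exact inv_mul_le_rpow_sub_one_mul_inv_of_antitoneOn hm_pos hm_decay hη.1 hη.2.le
    _ = ENNReal.ofReal ((3 / α + 1 / α ^ 2) * δ ^ α * (δ ^ α * m δ)⁻¹) := by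
        rw [lintegral_mul_const' _ _ ENNReal.ofReal_ne_top,
          lintegral_Ioo_add_log_div_mul_rpow 3 hα hδ zero_le_three,
          ← ENNReal.ofReal_mul (by positivity)]
    _ = ENNReal.ofReal (((1 + 3 * α) / α ^ 2) / m δ) := by
        have := (rpow_pos_of_pos hδ α).ne'
        congr 1
        field_simp
        ring
end

section
/- Let m : (0,∞) → (0,∞) be non-increasing with r^α·m(r) non-increasing for some α > 0, and set c_α = 1 + (3/2)^{−α} ∈ (1,2). Then there exists γ₀ > 0, depending only on α and κ, such that the following holds for every 0 < γ ≤ γ₀, every κ > 0, every B ≥ 1, and every δ > 0 with m(δ) = B/κ: if ω : [0,∞) → [0,∞) is continuous, concave, non-decreasing, with ω(0) = 0, ω(δ) ≥ Bδ/2, and ω′(ξ) = γ m(2ξ) for all ξ > δ, then ω(2ξ) ≤ c_α ω(ξ) for all ξ ≥ δ. -/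
/-!
Put `M = m(2ξ)`. Since `ω' = γ m(2·)` and `m` is non-increasing, `ω(2ξ) - ω(ξ) ≤ γ M ξ`, so it
suffices to show `γ M ξ ≤ A ω(ξ)` for any `A ≥ max (1 - α) 2^{-α}`, e.g. `A = (3/2)^{-α}`.
On `(δ, ξ)` the decay of `r^α m(r)` gives `ω'(x) ≥ K x^{-α}` with `K = γ M ξ^α`, hence
`A (ω ξ - ω δ) ≥ K (ξ^{1-α} - δ^{1-α})` because `1 - α ≤ A`. The remaining term `K δ^{1-α}` is
at most `2^{-α} γ m(δ) δ`, which the normalisation `m(δ) = B/κ`, `γ ≤ κ/2`, `ω(δ) ≥ Bδ/2` bounds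
by `A ω(δ)`.
-/

open Set Real

lemma sub_le_sub_of_hasDerivAt_le {f g f' g' : ℝ → ℝ} {a b : ℝ} (hab : a ≤ b)
    (hf : ContinuousOn f (Icc a b)) (hg : ContinuousOn g (Icc a b))
    (hf' : ∀ x ∈ Ioo a b, HasDerivAt f (f' x) x) (hg' : ∀ x ∈ Ioo a b, HasDerivAt g (g' x) x)
    (hle : ∀ x ∈ Ioo a b, f' x ≤ g' x) : f b - f a ≤ g b - g a := by
  have hmono : MonotoneOn (fun x => g x - f x) (Icc a b) := by
    refine monotoneOn_of_hasDerivWithinAt_nonneg (convex_Icc a b) (hg.sub hf)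
      (fun x hx => ?_) (fun x hx => ?_) (f' := fun x => g' x - f' x)
    · rw [interior_Icc] at hx
      exact ((hg' x hx).sub (hf' x hx)).hasDerivWithinAt
    · rw [interior_Icc] at hx
      exact sub_nonneg.2 (hle x hx)
  linarith [hmono (left_mem_Icc.2 hab) (right_mem_Icc.2 hab) hab]

lemma one_sub_le_rpow_neg {b α : ℝ} (hb : 0 < b) (hlog : log b ≤ 1) (hα : 0 ≤ α) :
    1 - α ≤ b ^ (-α) := by
  rw [rpow_def_of_pos hb]
  nlinarith [add_one_le_exp (log b * -α), mul_le_mul_of_nonneg_right hlog hα]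

lemma rpow_mul_two_mul_le {α : ℝ} {m : ℝ → ℝ}
    (hm : AntitoneOn (fun r => r ^ α * m r) (Ioi 0)) {x y : ℝ} (hx : 0 < x) (hxy : x ≤ y) :
    y ^ α * m (2 * y) ≤ x ^ α * m (2 * x) := by
  have h := hm (show 0 < 2 * x by positivity) (show 0 < 2 * y by linarith)
    (by linarith)
  simp only [mul_rpow zero_le_two hx.le, mul_rpow zero_le_two (hx.le.trans hxy)] at h
  nlinarith [rpow_pos_of_pos zero_lt_two α]

lemma sub_le_of_hasDerivAt_of_antitoneOn {γ ξ : ℝ} {m ω : ℝ → ℝ} (hγ : 0 ≤ γ)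
    (hm : AntitoneOn m (Ioi 0)) (hξ : 0 < ξ) (hω : ContinuousOn ω (Icc ξ (2 * ξ)))
    (hω' : ∀ x ∈ Ioo ξ (2 * ξ), HasDerivAt ω (γ * m (2 * x)) x) :
    ω (2 * ξ) - ω ξ ≤ γ * m (2 * ξ) * ξ := by
  have h := sub_le_sub_of_hasDerivAt_le (by linarith) hω
    (g := fun x => γ * m (2 * ξ) * x) (by fun_prop) hω'
    (fun x _ => by simpa using (hasDerivAt_id x).const_mul (γ * m (2 * ξ)))
    (fun x hx => by
      have : m (2 * x) ≤ m (2 * ξ) :=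
        hm (show (0 : ℝ) < 2 * ξ by positivity) (show (0 : ℝ) < 2 * x by linarith [hx.1])
          (by linarith [hx.1])
      exact mul_le_mul_of_nonneg_left this hγ)
  linarith

lemma mul_rpow_sub_rpow_le_mul_sub {α γ A δ ξ : ℝ} {m ω : ℝ → ℝ} (hγ : 0 ≤ γ) (hA₀ : 0 ≤ A)
    (hA : 1 - α ≤ A) (hmα : AntitoneOn (fun r => r ^ α * m r) (Ioi 0)) (hM : 0 ≤ m (2 * ξ))
    (hδ : 0 < δ) (hδξ : δ ≤ ξ) (hω : ContinuousOn ω (Icc δ ξ))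
    (hω' : ∀ x ∈ Ioo δ ξ, HasDerivAt ω (γ * m (2 * x)) x) :
    γ * m (2 * ξ) * ξ ^ α * (ξ ^ (1 - α) - δ ^ (1 - α)) ≤ A * (ω ξ - ω δ) := by
  set K := γ * m (2 * ξ) * ξ ^ α
  have hK : 0 ≤ K := mul_nonneg (mul_nonneg hγ hM) (rpow_nonneg (hδ.le.trans hδξ) _)
  have h := sub_le_sub_of_hasDerivAt_le hδξ (f := fun x => K * x ^ (1 - α))
    (f' := fun x => K * ((1 - α) * x ^ (-α))) (g := fun x => A * ω x)
    (fun x hx => ((continuousAt_rpow_const x _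
      (Or.inl (hδ.trans_le hx.1).ne')).continuousWithinAt).const_smul K)
    (hω.const_smul A)
    (fun x hx => by
      have := (hasDerivAt_rpow_const (p := 1 - α) (Or.inl (hδ.trans hx.1).ne')).const_mul K
      rwa [show 1 - α - 1 = -α by ring] at this)
    (fun x hx => (hω' x hx).const_mul A)
    (fun x hx => by
      have hx0 : 0 < x := hδ.trans hx.1
      have hdecay : K * x ^ (-α) ≤ γ * m (2 * x) := by
        have := rpow_mul_two_mul_le hmα hx0 hx.2.le
        rw [rpow_neg hx0.le, ← div_eq_mul_inv, div_le_iff₀ (rpow_pos_of_pos hx0 α)]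
        nlinarith
      calc K * ((1 - α) * x ^ (-α)) = (1 - α) * (K * x ^ (-α)) := by ring
        _ ≤ A * (K * x ^ (-α)) := by gcongr
        _ ≤ A * (γ * m (2 * x)) := by gcongr)
  linarith

lemma mul_rpow_mul_rpow_one_sub_le {α δ ξ : ℝ} {m : ℝ → ℝ}
    (hmα : AntitoneOn (fun r => r ^ α * m r) (Ioi 0)) (hδ : 0 < δ) (hδξ : δ ≤ ξ) :
    m (2 * ξ) * ξ ^ α * δ ^ (1 - α) ≤ 2 ^ (-α) * (m δ * δ) := by
  have hξ : 0 < ξ := hδ.trans_le hδξ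
  have h := hmα hδ (show 0 < 2 * ξ by positivity) (by linarith)
  simp only [mul_rpow zero_le_two hξ.le] at h
  have hδ' : δ ^ α * δ ^ (1 - α) = δ := by rw [← rpow_add hδ]; simp
  have h2 : 2 ^ (-α) * 2 ^ α = (1 : ℝ) := by rw [← rpow_add zero_lt_two]; simp
  calc m (2 * ξ) * ξ ^ α * δ ^ (1 - α)
      = 2 ^ (-α) * (2 ^ α * ξ ^ α * m (2 * ξ)) * δ ^ (1 - α) := by
        rw [← mul_assoc, ← mul_assoc, h2]; ring
    _ ≤ 2 ^ (-α) * (δ ^ α * m δ) * δ ^ (1 - α) := by gcongr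
    _ = 2 ^ (-α) * m δ * (δ ^ α * δ ^ (1 - α)) := by ring
    _ = 2 ^ (-α) * (m δ * δ) := by rw [hδ']; ring

theorem map_two_mul_le_of_hasDerivAt {α γ A δ ξ : ℝ} {m ω : ℝ → ℝ} (hγ : 0 ≤ γ)
    (hA₁ : 1 - α ≤ A) (hA₂ : 2 ^ (-α) ≤ A) (hmpos : ∀ r > 0, 0 < m r)
    (hm : AntitoneOn m (Ioi 0)) (hmα : AntitoneOn (fun r => r ^ α * m r) (Ioi 0))
    (hδ : 0 < δ) (hωδ : γ * m δ * δ ≤ ω δ) (hω : ContinuousOn ω (Ici δ))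
    (hω' : ∀ x, δ < x → HasDerivAt ω (γ * m (2 * x)) x) (hδξ : δ ≤ ξ) :
    ω (2 * ξ) ≤ (1 + A) * ω ξ := by
  have hξ : 0 < ξ := hδ.trans_le hδξ
  have hA : 0 ≤ A := (rpow_pos_of_pos zero_lt_two _).le.trans hA₂
  have hmδ : 0 ≤ γ * (m δ * δ) := mul_nonneg hγ (mul_pos (hmpos δ hδ) hδ).le
  have hξ' : ξ ^ α * ξ ^ (1 - α) = ξ := by rw [← rpow_add hξ]; simp
  have hdouble := sub_le_of_hasDerivAt_of_antitoneOn hγ hm hξ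
    (hω.mono fun x hx => hδξ.trans hx.1) fun x hx => hω' x (hδξ.trans_lt hx.1)
  have hgrowth := mul_rpow_sub_rpow_le_mul_sub hγ hA hA₁ hmα
    (hmpos _ (by positivity : (0 : ℝ) < 2 * ξ)).le hδ hδξ (hω.mono fun x hx => hx.1)
    fun x hx => hω' x hx.1
  have hinit : γ * m (2 * ξ) * ξ ^ α * δ ^ (1 - α) ≤ A * ω δ :=
    calc γ * m (2 * ξ) * ξ ^ α * δ ^ (1 - α)
        = γ * (m (2 * ξ) * ξ ^ α * δ ^ (1 - α)) := by ring
      _ ≤ γ * (2 ^ (-α) * (m δ * δ)) := by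
        gcongr ?_ * ?_; exact mul_rpow_mul_rpow_one_sub_le hmα hδ hδξ
      _ ≤ A * (γ * (m δ * δ)) := by nlinarith [mul_le_mul_of_nonneg_right hA₂ hmδ]
      _ ≤ A * ω δ := by gcongr; linarith
  have hkey : γ * m (2 * ξ) * ξ ≤ A * ω ξ :=
    calc γ * m (2 * ξ) * ξ = γ * m (2 * ξ) * ξ ^ α * ξ ^ (1 - α) := by
          rw [mul_assoc _ (ξ ^ α), hξ']
      _ ≤ A * ω ξ := by linarith
  linarith

/-- **Doubling bound for the constructed moduli of continuity.** Let `m` be positive and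
non-increasing with `r^α m(r)` non-increasing for some `α > 0`, and let
`c_α = 1 + (3/2)^{-α} ∈ (1,2)`. There exists `γ₀ > 0`, depending only on `α` and `κ`,
such that for every `0 < γ ≤ γ₀`, every `B ≥ 1` and `δ > 0` with `m(δ) = B/κ`: if `ω` is
continuous, concave, non-decreasing on `[0,∞)` with `ω(0) = 0`, `ω(δ) ≥ Bδ/2`, and
`ω'(ξ) = γ m(2ξ)` for `ξ > δ`, then `ω(2ξ) ≤ c_α ω(ξ)` for all `ξ ≥ δ`. -/
theorem modulus_doubling_bound (α κ : ℝ) (hα : 0 < α) (hκ : 0 < κ) :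
    ∃ γ₀ > (0:ℝ), ∀ γ : ℝ, 0 < γ → γ ≤ γ₀ →
      ∀ m : ℝ → ℝ,
        (∀ r > (0:ℝ), 0 < m r) →
        AntitoneOn m (Ioi 0) →
        AntitoneOn (fun r => r ^ α * m r) (Ioi 0) →
      ∀ B : ℝ, 1 ≤ B → ∀ δ > (0:ℝ), m δ = B / κ →
      ∀ ω : ℝ → ℝ,
        (∀ s : ℝ, 0 ≤ s → 0 ≤ ω s) →
        ContinuousOn ω (Ici 0) →
        ConcaveOn ℝ (Ici 0) ω →
        MonotoneOn ω (Ici 0) →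
        ω 0 = 0 →
        B * δ / 2 ≤ ω δ →
        (∀ ξ : ℝ, δ < ξ → HasDerivAt ω (γ * m (2 * ξ)) ξ) →
      ∀ ξ : ℝ, δ ≤ ξ → ω (2 * ξ) ≤ (1 + (3/2 : ℝ) ^ (-α)) * ω ξ := by
  refine ⟨κ / 2, by positivity,
    fun γ hγ hγ₀ m hmpos hm hmα B _ δ hδ hmδ ω _ hω _ _ _ hωδ hω' ξ hξ => ?_⟩
  have hγmδ : γ * m δ * δ ≤ ω δ :=
    calc γ * m δ * δ ≤ κ / 2 * (B / κ) * δ := by rw [hmδ]; gcongr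
      _ = B * δ / 2 := by field_simp
      _ ≤ ω δ := hωδ
  refine map_two_mul_le_of_hasDerivAt hγ.le ?_ ?_ hmpos hm hmα hδ hγmδ
    (hω.mono fun x hx => hδ.le.trans hx) hω' hξ
  · have hlog := log_le_sub_one_of_pos (show (0 : ℝ) < 3 / 2 by norm_num)
    exact one_sub_le_rpow_neg (by norm_num) (by linarith) hα.le
  · exact rpow_le_rpow_of_nonpos (by norm_num) (by norm_num) (by linarith)
end
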